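/- Finite-mirroring valuation (Theorem 2), exhausted case: once the holder has performed all M allowed mirrorings, the remaining value satisfies the pure Gaussian backward recursion (no maximization) and equals q*(τ, M) = ν( x*_{T-τ} + (σ²/2 + (-1)^M (α - σ²/2))·τ, σ²τ ) for τ = nε; in particular this holds for arbitrary (not necessarily monotone) Gaussian-integrable payoffs. -/

import Mathlib

/-! Once the mirrorings are exhausted, every increment of the log mirror path is `φ = (-1)^M`
times an increment of the log underlying, and `φ² = 1`. Each backward step therefore averages
against a Gaussian of mean `φ(α - σ²/2)ε` and variance `σ²ε`, and since Gaussians form a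
convolution semigroup, `n` steps average `f ∘ exp` against a single Gaussian of mean
`φ(α - σ²/2)nε` and variance `σ²nε`. This is `ν`, whose first argument is the mean shifted by half
the variance. -/

open MeasureTheory

/-- Gaussian smoothing of the payoff `f` in log-coordinates, extended to variance `0`. -/
noncomputable def nu (f : ℝ → ℝ) (z s : ℝ) : ℝ :=
  if s = 0 then f (Real.exp z)
  else (Real.sqrt (2 * Real.pi * s))⁻¹ *
    ∫ x : ℝ, f (Real.exp x) * Real.exp (-(x - z + s/2)^2 / (2*s))

open ProbabilityTheory Real
open scoped NNReal

lemma integral_gaussianReal_eq_integral_mul_exp (g : ℝ → ℝ) (m : ℝ) {v : ℝ} (hv : 0 < v) :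
    ∫ x, g x ∂gaussianReal m v.toNNReal
      = (√(2 * π * v))⁻¹ * ∫ x, g x * exp (-(x - m) ^ 2 / (2 * v)) := by
  rw [integral_gaussianReal_eq_integral_smul (by simpa using hv), ← integral_const_mul]
  congr with x
  simp only [gaussianPDFReal, Real.coe_toNNReal _ hv.le, smul_eq_mul]
  ring

lemma integrable_gaussianReal_iff (g : ℝ → ℝ) (m : ℝ) {v : ℝ} (hv : 0 < v) :
    Integrable g (gaussianReal m v.toNNReal)
      ↔ Integrable (fun x => g x * exp (-(x - m) ^ 2 / (2 * v))) := by
  rw [gaussianReal_of_var_ne_zero _ (by simpa using hv), gaussianPDF_def,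
    integrable_withDensity_iff_integrable_smul' (by fun_prop)
      (ae_of_all _ fun _ => ENNReal.ofReal_lt_top)]
  refine Iff.trans ?_ (integrable_const_mul_iff (by positivity : (√(2 * π * v))⁻¹ ≠ 0).isUnit _)
  congr! 2 with x
  rw [ENNReal.toReal_ofReal (gaussianPDFReal_nonneg _ _ _)]
  simp only [gaussianPDFReal, Real.coe_toNNReal _ hv.le, smul_eq_mul]
  ring

lemma integrable_gaussianReal_of_integrable_mul_exp {g : ℝ → ℝ}
    (hg : ∀ z s : ℝ, 0 < s → Integrable (fun x => g x * exp (-(x - z + s / 2) ^ 2 / (2 * s))))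
    (m : ℝ) {v : ℝ} (hv : 0 < v) : Integrable g (gaussianReal m v.toNNReal) := by
  rw [integrable_gaussianReal_iff _ _ hv]
  simpa only [sub_add_eq_sub_sub, sub_add_cancel] using hg (m + v / 2) v hv

lemma integral_gaussianReal_sq_mul_eq_integral_mul_exp {σ ε : ℝ} (hσ : 0 < σ) (hε : 0 < ε)
    (g : ℝ → ℝ) (m : ℝ) :
    ∫ x, g x ∂gaussianReal m (σ ^ 2 * ε).toNNReal
      = (σ * √(2 * π * ε))⁻¹ * ∫ x, g x * exp (-(x - m) ^ 2 / (2 * σ ^ 2 * ε)) := by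
  have hsqrt : √(2 * π * (σ ^ 2 * ε)) = σ * √(2 * π * ε) := by
    rw [show 2 * π * (σ ^ 2 * ε) = σ ^ 2 * (2 * π * ε) by ring, Real.sqrt_mul (sq_nonneg σ),
      Real.sqrt_sq hσ.le]
  rw [integral_gaussianReal_eq_integral_mul_exp _ _ (by positivity), hsqrt, mul_assoc 2 (σ ^ 2) ε]

lemma nu_eq_integral_gaussianReal (f : ℝ → ℝ) (z : ℝ) {s : ℝ} (hs : 0 ≤ s) :
    nu f z s = ∫ x, f (exp x) ∂gaussianReal (z - s / 2) s.toNNReal := by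
  rcases hs.eq_or_lt with rfl | hs
  · simp [nu, gaussianReal_zero_var]
  rw [nu, if_neg hs.ne', integral_gaussianReal_eq_integral_mul_exp _ _ hs]
  congr with x
  ring_nf

lemma integral_integral_gaussianReal_const_add_mul {g : ℝ → ℝ} {a b c : ℝ} {s v : ℝ≥0}
    (hc : c ≠ 0)
    (hg : Integrable g (gaussianReal (a + c * b) (s + .mk (c ^ 2) (sq_nonneg c) * v))) :
    ∫ u, (∫ x, g x ∂gaussianReal (a + c * u) s) ∂gaussianReal b v
      = ∫ x, g x ∂gaussianReal (a + c * b) (s + .mk (c ^ 2) (sq_nonneg c) * v) := by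
  have hconv : gaussianReal (c * b) (.mk (c ^ 2) (sq_nonneg c) * v) ∗ gaussianReal a s
      = gaussianReal (a + c * b) (s + .mk (c ^ 2) (sq_nonneg c) * v) := by
    rw [gaussianReal_conv_gaussianReal, add_comm a, add_comm s]
  rw [← hconv] at hg ⊢
  rw [integral_conv hg, ← gaussianReal_map_const_mul,
    (measurableEmbedding_mulLeft₀ hc).integral_map]
  congr with u
  rw [← gaussianReal_map_const_add, (measurableEmbedding_addLeft (c * u)).integral_map]

lemma integral_integral_gaussianReal_toNNReal_const_add_mul {g : ℝ → ℝ} {a b c s v : ℝ}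
    (hc : c ≠ 0) (hs : 0 ≤ s) (hv : 0 ≤ v)
    (hg : Integrable g (gaussianReal (a + c * b) (s + c ^ 2 * v).toNNReal)) :
    ∫ u, (∫ x, g x ∂gaussianReal (a + c * u) s.toNNReal) ∂gaussianReal b v.toNNReal
      = ∫ x, g x ∂gaussianReal (a + c * b) (s + c ^ 2 * v).toNNReal := by
  have hvar : (s + c ^ 2 * v).toNNReal = s.toNNReal + .mk (c ^ 2) (sq_nonneg c) * v.toNNReal := by
    ext
    rw [NNReal.coe_add, NNReal.coe_mul, NNReal.coe_mk, Real.coe_toNNReal _ hs,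
      Real.coe_toNNReal _ hv, Real.coe_toNNReal _ (by positivity)]
  rw [hvar] at hg ⊢
  exact integral_integral_gaussianReal_const_add_mul hc hg

theorem exhausted_mirrorings_value_general (f : ℝ → ℝ)
    (hint : ∀ z s : ℝ, 0 < s →
      Integrable (fun x : ℝ => f (Real.exp x) * Real.exp (-(x - z + s/2)^2 / (2*s))))
    (σ ε α : ℝ) (hσ : 0 < σ) (hε : 0 < ε)
    (M : ℕ) (Q : ℕ → ℝ → ℝ)
    (hQ0 : ∀ y, Q 0 y = f (Real.exp y))
    (hQrec : ∀ n y, Q (n+1) y =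
      (σ * Real.sqrt (2 * Real.pi * ε))⁻¹ *
        ∫ u : ℝ, Q n (y + (-1:ℝ)^M * u) * Real.exp (-(u - α*ε + σ^2*ε/2)^2 / (2*σ^2*ε))) :
    ∀ n : ℕ, ∀ y : ℝ,
      Q n y = nu f (y + (σ^2/2 + (-1:ℝ)^M * (α - σ^2/2)) * (n*ε)) (σ^2*(n*ε)) := by
  set φ : ℝ := (-1) ^ M
  have hφ : φ ^ 2 = 1 := by rw [← pow_mul, mul_comm, pow_mul]; norm_num
  have hstep (n : ℕ) (y : ℝ) :
      Q (n + 1) y =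
        ∫ u, Q n (y + φ * u) ∂gaussianReal ((α - σ ^ 2 / 2) * ε) (σ ^ 2 * ε).toNNReal := by
    rw [hQrec, integral_gaussianReal_sq_mul_eq_integral_mul_exp hσ hε]
    congr with u
    ring_nf
  suffices key : ∀ n y, Q n y = ∫ x, f (exp x)
      ∂gaussianReal (φ * (n * ((α - σ ^ 2 / 2) * ε)) + y) (σ ^ 2 * (n * ε)).toNNReal by
    intro n y
    rw [key, nu_eq_integral_gaussianReal _ _ (by positivity)]
    congr 2
    ring
  intro n
  induction n with
  | zero => simp [hQ0, gaussianReal_zero_var]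
  | succ n ih =>
    intro y
    have hvar : σ ^ 2 * (n * ε) + φ ^ 2 * (σ ^ 2 * ε) = σ ^ 2 * ((n + 1 : ℕ) * ε) := by
      push_cast; rw [hφ]; ring
    simp_rw [hstep, ih, ← add_assoc]
    rw [integral_integral_gaussianReal_toNNReal_const_add_mul (by positivity) (by positivity)
      (by positivity), hvar]
    · congr 2
      push_cast
      ring
    · rw [hvar]
      exact integrable_gaussianReal_of_integrable_mul_exp hint _ (by positivity)

/-- Theorem 2, exhausted case: after all `M` allowed mirrorings have been performed the
value satisfies the pure Gaussian backward recursion (no maximization) and equals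
`ν(x* + (σ²/2 + (-1)^M(α - σ²/2))τ, σ²τ)`, for an arbitrary (not necessarily monotone)
Gaussian-integrable payoff. -/
theorem exhausted_mirrorings_value (f : ℝ → ℝ)
    (hint : ∀ z s : ℝ, 0 < s →
      Integrable (fun x : ℝ => f (Real.exp x) * Real.exp (-(x - z + s/2)^2 / (2*s))))
    (σ r δ ε α : ℝ) (hσ : 0 < σ) (hε : 0 < ε) (hα : α = r - δ)
    (M : ℕ) (Q : ℕ → ℝ → ℝ)
    (hQ0 : ∀ y, Q 0 y = f (Real.exp y))
    (hQrec : ∀ n y, Q (n+1) y =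
      (σ * Real.sqrt (2 * Real.pi * ε))⁻¹ *
        ∫ u : ℝ, Q n (y + (-1:ℝ)^M * u) * Real.exp (-(u - α*ε + σ^2*ε/2)^2 / (2*σ^2*ε))) :
    ∀ n : ℕ, ∀ y : ℝ,
      Q n y = nu f (y + (σ^2/2 + (-1:ℝ)^M * (α - σ^2/2)) * (n*ε)) (σ^2*(n*ε)) :=
  exhausted_mirrorings_value_general f hint σ ε α hσ hε M Q hQ0 hQrec
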